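/- The minimal surface equation satisfies the nonlinear null condition: for every p ∈ R^{n+1} with 1 + m^{μν} p_μ p_ν > 0 and every covector ξ ∈ R^{n+1} satisfying g^{αβ}(p) ξ_α ξ_β = 0, one has (∂g^{αβ}/∂p_γ)(p) ξ_α ξ_β ξ_γ = 0. -/

import Mathlib

noncomputable section

open scoped BigOperators

/-- The Minkowski metric `diag(-1,1,...,1)` on `ℝ^{n+1}` (it is its own inverse). -/
def mink (n : ℕ) (α β : Fin (n + 1)) : ℝ :=
  if α = β then (if α = 0 then -1 else 1) else 0

/-- `m^{μν} p_μ p_ν` for a fixed vector `p` (the gradient `∂u` at a point). -/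
def mSq (n : ℕ) (p : Fin (n + 1) → ℝ) : ℝ :=
  ∑ μ, ∑ ν, mink n μ ν * p μ * p ν

/-- The induced metric `g_{αβ} = m_{αβ} + p_α p_β`. -/
def gLow (n : ℕ) (p : Fin (n + 1) → ℝ) (α β : Fin (n + 1)) : ℝ :=
  mink n α β + p α * p β

/-- The dual metric `G^{αβ} = m^{αβ} - (m^{αγ} m^{βδ} p_γ p_δ)/(1 + m^{μν} p_μ p_ν)`. -/
def gUp (n : ℕ) (p : Fin (n + 1) → ℝ) (α β : Fin (n + 1)) : ℝ :=
  mink n α β - (∑ γ, mink n α γ * p γ) * (∑ δ, mink n β δ * p δ) / (1 + mSq n p)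

/-! Contracted with `ξ`, the cubic expression is the derivative of `q ↦ g^{αβ}(q) ξ_α ξ_β` in the
direction `ξ`. Writing `X = m(q, ξ)` and `A = 1 + m(q, q)`, this function is
`m(ξ, ξ) - X² / A`, and differentiating along `ξ` gives
`-(2X/A) (m(ξ, ξ) - X² / A) = -(2X/A) g^{αβ}(q) ξ_α ξ_β`, which vanishes on the null cone. -/

section DualMetric

variable {𝕜 E : Type*} [NontriviallyNormedField 𝕜] [NormedAddCommGroup E] [NormedSpace 𝕜 E]

/-- `g^{αβ}(q) ξ_α ξ_β` for the dual metric of the minimal surface equation, with the Minkowski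
form replaced by an arbitrary bilinear form `B`. -/
def dualMetricQuad (B : E →L[𝕜] E →L[𝕜] 𝕜) (q ξ : E) : 𝕜 :=
  B ξ ξ - B q ξ ^ 2 / (1 + B q q)

theorem fderiv_dualMetricQuad_apply_self (B : E →L[𝕜] E →L[𝕜] 𝕜) (hB : ∀ x y, B x y = B y x)
    {p : E} (hp : 1 + B p p ≠ 0) (ξ : E) :
    fderiv 𝕜 (fun q => dualMetricQuad B q ξ) p ξ
      = -(2 * B p ξ / (1 + B p p)) * dualMetricQuad B p ξ := by
  have hlin : HasFDerivAt (fun q => B q ξ) (B.flip ξ) p := (B.flip ξ).hasFDerivAt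
  have hquad : HasFDerivAt (fun q => 1 + B q q) (B.flip p + B p) p :=
    ((B.hasFDerivAt.clm_apply (hasFDerivAt_id p)).const_add 1).congr_fderiv
      (by ext; simp [add_comm])
  have h : HasFDerivAt (fun q => B ξ ξ - B q ξ ^ 2 * (1 + B q q)⁻¹) _ p :=
    ((hlin.pow 2).mul ((hasFDerivAt_inv hp).comp p hquad)).const_sub (B ξ ξ)
  have hf : (fun q => dualMetricQuad B q ξ) = fun q => B ξ ξ - B q ξ ^ 2 * (1 + B q q)⁻¹ := by
    funext q
    rw [dualMetricQuad, div_eq_mul_inv]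
  rw [hf, h.fderiv]
  simp only [ContinuousLinearMap.comp_add, smul_add, Function.comp_apply, Nat.add_one_sub_one,
    pow_one, nsmul_eq_mul, Nat.cast_ofNat, add_apply, neg_apply, smul_apply,
    ContinuousLinearMap.flip_apply, smul_eq_mul, ContinuousLinearMap.comp_apply,
    ContinuousLinearMap.toSpanSingleton_apply, hB ξ p, dualMetricQuad]
  field_simp
  ring

end DualMetric

theorem sum_fderiv_apply_single_mul {𝕜 ι : Type*} [NontriviallyNormedField 𝕜] [Fintype ι]
    [DecidableEq ι] {f : ι → ι → (ι → 𝕜) → 𝕜} {p : ι → 𝕜}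
    (hf : ∀ α β, DifferentiableAt 𝕜 (f α β) p) (ξ : ι → 𝕜) :
    ∑ γ, ∑ α, ∑ β, fderiv 𝕜 (f α β) p (Pi.single γ 1) * ξ α * ξ β * ξ γ
      = fderiv 𝕜 (fun q => ∑ α, ∑ β, f α β q * ξ α * ξ β) p ξ := by
  have hexpand : ∀ α β, fderiv 𝕜 (f α β) p ξ
      = ∑ γ, fderiv 𝕜 (f α β) p (Pi.single γ 1) * ξ γ := by
    intro α β
    conv_lhs => rw [pi_eq_sum_univ' ξ]
    simp only [map_sum, map_smul, smul_eq_mul, mul_comm]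
  have hsum : HasFDerivAt (fun q => ∑ α, ∑ β, f α β q * ξ α * ξ β)
      (∑ α, ∑ β, (ξ α * ξ β) • fderiv 𝕜 (f α β) p) p := by
    refine HasFDerivAt.fun_sum fun α _ => HasFDerivAt.fun_sum fun β _ => ?_
    simpa only [mul_assoc] using (hf α β).hasFDerivAt.mul_const (ξ α * ξ β)
  rw [hsum.fderiv]
  simp only [sum_apply, smul_apply, smul_eq_mul, hexpand, Finset.mul_sum]
  rw [Finset.sum_comm]
  refine Finset.sum_congr rfl fun α _ => ?_
  rw [Finset.sum_comm]
  exact Finset.sum_congr rfl fun β _ => Finset.sum_congr rfl fun γ _ => by ring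

theorem mink_comm (n : ℕ) (α β : Fin (n + 1)) : mink n α β = mink n β α := by
  unfold mink
  split_ifs <;> simp_all

def minkForm (n : ℕ) : (Fin (n + 1) → ℝ) →L[ℝ] (Fin (n + 1) → ℝ) →L[ℝ] ℝ :=
  ∑ μ, ∑ ν, mink n μ ν • (ContinuousLinearMap.proj μ).smulRight (ContinuousLinearMap.proj ν)

theorem minkForm_apply (n : ℕ) (x y : Fin (n + 1) → ℝ) :
    minkForm n x y = ∑ μ, ∑ ν, mink n μ ν * x μ * y ν := by
  simp [minkForm, mul_assoc]

theorem minkForm_comm (n : ℕ) (x y : Fin (n + 1) → ℝ) : minkForm n x y = minkForm n y x := by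
  rw [minkForm_apply, minkForm_apply, Finset.sum_comm]
  simp only [mink_comm n]
  congr! 2 with μ _ ν
  ring

theorem mSq_eq_minkForm (n : ℕ) (q : Fin (n + 1) → ℝ) : mSq n q = minkForm n q q :=
  (minkForm_apply n q q).symm

theorem sum_mink_mul_mul (n : ℕ) (q ξ : Fin (n + 1) → ℝ) :
    ∑ α, (∑ γ, mink n α γ * q γ) * ξ α = minkForm n q ξ := by
  rw [minkForm_comm, minkForm_apply]
  simp only [Finset.sum_mul]
  congr! 2
  ring

theorem sum_gUp_mul_mul (n : ℕ) (q ξ : Fin (n + 1) → ℝ) :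
    ∑ α, ∑ β, gUp n q α β * ξ α * ξ β = dualMetricQuad (minkForm n) q ξ := by
  have hproj : ∑ α, ∑ β, (∑ γ, mink n α γ * q γ) * (∑ δ, mink n β δ * q δ) / (1 + mSq n q)
      * ξ α * ξ β = minkForm n q ξ ^ 2 / (1 + minkForm n q q) := by
    rw [mSq_eq_minkForm, ← sum_mink_mul_mul n q ξ, sq, Finset.sum_mul_sum]
    simp only [Finset.sum_div]
    refine Finset.sum_congr rfl fun α _ => Finset.sum_congr rfl fun β _ => ?_
    ring
  simp only [gUp, sub_mul, Finset.sum_sub_distrib, ← minkForm_apply, hproj, dualMetricQuad]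

theorem differentiableAt_gUp (n : ℕ) {p : Fin (n + 1) → ℝ} (hp : 1 + mSq n p ≠ 0)
    (α β : Fin (n + 1)) : DifferentiableAt ℝ (fun q => gUp n q α β) p := by
  unfold gUp mSq
  fun_prop (disch := exact hp)

/-- the minimal surface equation satisfies the nonlinear null condition:
for every `p` with `1 + m^{μν} p_μ p_ν > 0` and every covector `ξ` which is null for the
dual metric, `g^{αβ}(p) ξ_α ξ_β = 0`, one has `(∂g^{αβ}/∂p_γ)(p) ξ_α ξ_β ξ_γ = 0`. -/
theorem nonlinear_null_condition (n : ℕ) (p : Fin (n + 1) → ℝ)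
    (hg : 0 < 1 + mSq n p) (ξ : Fin (n + 1) → ℝ)
    (hξ : ∑ α, ∑ β, gUp n p α β * ξ α * ξ β = 0) :
    ∑ γ, ∑ α, ∑ β,
      fderiv ℝ (fun q => gUp n q α β) p (Pi.single γ 1) * ξ α * ξ β * ξ γ = 0 := by
  rw [sum_fderiv_apply_single_mul (differentiableAt_gUp n hg.ne'), funext (sum_gUp_mul_mul n · ξ)]
  rw [sum_gUp_mul_mul] at hξ
  rw [mSq_eq_minkForm] at hg
  rw [fderiv_dualMetricQuad_apply_self _ (minkForm_comm n) hg.ne', hξ, mul_zero]
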